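/- arXiv:2412.18595 — 2 statements merged into one kernel-verified Lean document; each statement's English description precedes it below -/
import Mathlib

section
/- For any connected graph G and any pair of vertices u,v, the basis number of the graph G+uv obtained by adding an edge uv (possibly parallel) satisfies b(G+uv) ≤ b(G)+1. -/
open scoped Classical

noncomputable section

/-- Helper: quotients of finite types are finite. -/
noncomputable def quotFintype {α : Type} [Fintype α] (r : α → α → Prop) : Fintype (Quot r) :=
  Fintype.ofSurjective (Quot.mk r) fun q => Quot.exists_rep q

/-- A finite multigraph.  Each edge `e` carries an (arbitrarily chosen) ordering of its two
endpoints, `fst e` and `snd e`; a loop is an edge with `fst e = snd e`. -/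
structure Multigraph where
  V : Type
  E : Type
  fintV : Fintype V
  fintE : Fintype E
  fst : E → V
  snd : E → V

attribute [instance] Multigraph.fintV Multigraph.fintE

namespace Multigraph

variable (G : Multigraph)

/-- Incidence of a vertex and an edge, modulo 2 (a loop is incident twice, i.e. 0 mod 2). -/
noncomputable def inc (v : G.V) (e : G.E) : ZMod 2 :=
  (if G.fst e = v then 1 else 0) + (if G.snd e = v then 1 else 0)

/-- The cycle space of `G` over `F_2`: characteristic vectors of edge sets in which every
vertex has even degree (i.e. Eulerian subgraphs), with addition = symmetric difference. -/
noncomputable def cycleSpace : Submodule (ZMod 2) (G.E → ZMod 2) where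
  carrier := {x | ∀ v : G.V, ∑ e : G.E, G.inc v e * x e = 0}
  zero_mem' := by intro v; simp
  add_mem' := by
    intro a b ha hb v
    have h : ∀ e : G.E, G.inc v e * (a + b) e = G.inc v e * a e + G.inc v e * b e := by
      intro e
      show G.inc v e * (a e + b e) = G.inc v e * a e + G.inc v e * b e
      ring
    rw [Finset.sum_congr rfl fun e _ => h e, Finset.sum_add_distrib, ha v, hb v, add_zero]
  smul_mem' := by
    intro c x hx v
    have h : ∀ e : G.E, G.inc v e * (c • x) e = c * (G.inc v e * x e) := by
      intro e
      show G.inc v e * (c * x e) = c * (G.inc v e * x e)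
      ring
    rw [Finset.sum_congr rfl fun e _ => h e, ← Finset.mul_sum, hx v, mul_zero]

/-- The charge of an edge `e` with respect to a collection `B` of (characteristic vectors of)
subgraphs: the number of members of `B` containing `e`. -/
noncomputable def charge (B : Finset (G.E → ZMod 2)) (e : G.E) : ℕ :=
  (B.filter fun x => x e ≠ 0).card

/-- `B` is a basis of the cycle space of `G`. -/
def IsCycleBasis (B : Finset (G.E → ZMod 2)) : Prop :=
  (∀ x ∈ B, x ∈ G.cycleSpace) ∧
    LinearIndependent (ZMod 2) (fun x : B => (x : G.E → ZMod 2)) ∧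
    Submodule.span (ZMod 2) (B : Set (G.E → ZMod 2)) = G.cycleSpace

/-- `B` is a `k`-basis: a basis of the cycle space in which every edge has charge at most `k`. -/
def IsKBasis (k : ℕ) (B : Finset (G.E → ZMod 2)) : Prop :=
  G.IsCycleBasis B ∧ ∀ e : G.E, G.charge B e ≤ k

/-- The basis number of `G`: the least `k` such that `G` has a `k`-basis. -/
noncomputable def basisNum : ℕ := sInf {k | ∃ B, G.IsKBasis k B}

/-- Adjacency of two vertices. -/
def Adj (a b : G.V) : Prop :=
  ∃ e : G.E, (G.fst e = a ∧ G.snd e = b) ∨ (G.fst e = b ∧ G.snd e = a)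

/-- Connectivity. -/
def Connected : Prop :=
  Nonempty G.V ∧ ∀ a b : G.V, Relation.ReflTransGen G.Adj a b

/-- Degree of a vertex (a loop counts twice). -/
noncomputable def degree (v : G.V) : ℕ :=
  ∑ e : G.E, ((if G.fst e = v then 1 else 0) + (if G.snd e = v then 1 else 0))

/-- The subgraph with the same vertex set and edge set restricted to `S`. -/
noncomputable def edgeRestrict (S : Set G.E) : Multigraph where
  V := G.V
  E := S
  fintV := G.fintV
  fintE := (Set.toFinite S).fintype
  fst := fun e => G.fst e.1
  snd := fun e => G.snd e.1

/-- Deletion of a vertex (and all edges incident with it). -/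
noncomputable def deleteVertex (v : G.V) : Multigraph where
  V := {u : G.V // u ≠ v}
  E := {e : G.E // G.fst e ≠ v ∧ G.snd e ≠ v}
  fintV := by classical exact inferInstance
  fintE := by classical exact inferInstance
  fst := fun e => ⟨G.fst e.1, e.2.1⟩
  snd := fun e => ⟨G.snd e.1, e.2.2⟩

/-- `G` is 2-connected: at least 3 vertices, connected, and no cutvertex. -/
def TwoConnected : Prop :=
  G.Connected ∧ 3 ≤ Nat.card G.V ∧ ∀ v : G.V, (G.deleteVertex v).Connected

/-- A cycle of length `n` in `G`: `n` distinct vertices and `n` distinct edges, with edge `i`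
joining vertex `i` to vertex `i+1` (cyclically). -/
def IsCycleOn (n : ℕ) (vs : Fin n → G.V) (es : Fin n → G.E) : Prop :=
  Function.Injective vs ∧ Function.Injective es ∧
    ∀ i : Fin n,
      (G.fst (es i) = vs i ∧ G.snd (es i) = vs (finRotate n i)) ∨
      (G.fst (es i) = vs (finRotate n i) ∧ G.snd (es i) = vs i)

/-- A path with `n` edges, given by its (distinct) vertices and its edges. -/
def IsPathOn (n : ℕ) (vs : Fin (n + 1) → G.V) (es : Fin n → G.E) : Prop :=
  Function.Injective vs ∧
    ∀ i : Fin n,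
      (G.fst (es i) = vs i.castSucc ∧ G.snd (es i) = vs i.succ) ∨
      (G.fst (es i) = vs i.succ ∧ G.snd (es i) = vs i.castSucc)

/-- `p` is the characteristic vector of (the edge set of) a path from `s` to `t`. -/
def IsPathVec (s t : G.V) (p : G.E → ZMod 2) : Prop :=
  ∃ (n : ℕ) (vs : Fin (n + 1) → G.V) (es : Fin n → G.E),
    G.IsPathOn n vs es ∧ vs 0 = s ∧ vs (Fin.last n) = t ∧
      ∀ f : G.E, p f ≠ 0 ↔ ∃ i, es i = f

/-- Two edges lie in a common block: they are equal, or they lie on a common cycle. -/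
def BlockRel (e f : G.E) : Prop :=
  e = f ∨ ∃ (n : ℕ) (vs : Fin n → G.V) (es : Fin n → G.E),
    1 ≤ n ∧ G.IsCycleOn n vs es ∧ (∃ i, es i = e) ∧ (∃ j, es j = f)

/-- `T` is a spanning tree of `G` (as an edge set): the spanning subgraph with edge set `T`
is connected and has no cycles. -/
def IsSpanningTree (T : Set G.E) : Prop :=
  (G.edgeRestrict T).Connected ∧
    ∀ (n : ℕ) (vs : Fin n → (G.edgeRestrict T).V) (es : Fin n → (G.edgeRestrict T).E),
      (G.edgeRestrict T).IsCycleOn n vs es → n = 0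

/-- Contraction of the edge `e`: identify its two endpoints and delete `e`. -/
noncomputable def contract (e : G.E) : Multigraph where
  V := Quot (fun a b : G.V => a = G.fst e ∧ b = G.snd e)
  E := {f : G.E // f ≠ e}
  fintV := quotFintype _
  fintE := by classical exact inferInstance
  fst := fun f => Quot.mk _ (G.fst f.1)
  snd := fun f => Quot.mk _ (G.snd f.1)

/-- Addition of a (possibly parallel) edge joining `u` and `v`. -/
noncomputable def addEdge (u v : G.V) : Multigraph where
  V := G.V
  E := Option G.E
  fintV := G.fintV
  fintE := inferInstance
  fst := fun o => o.elim u G.fst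
  snd := fun o => o.elim v G.snd

/-- Subdivision of the edge `e`: delete `e` and add a new vertex (`none`) joined to both
endpoints of `e`. -/
noncomputable def subdivide (e : G.E) : Multigraph where
  V := Option G.V
  E := {f : G.E // f ≠ e} ⊕ Bool
  fintV := inferInstance
  fintE := by classical exact inferInstance
  fst := Sum.elim (fun f => some (G.fst f.1))
    (fun b => cond b (some (G.fst e)) (some (G.snd e)))
  snd := Sum.elim (fun f => some (G.snd f.1)) (fun _ => none)

/-- Replacement of the edge `e` of `G` by the graph `H` with terminals `s`, `t`:
delete `e`, take the disjoint union with `H`, and identify the endpoints of `e`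
with the terminals. -/
noncomputable def replaceEdge (e : G.E) (H : Multigraph) (s t : H.V) : Multigraph where
  V := Quot (fun a b : G.V ⊕ H.V =>
        (a = Sum.inl (G.fst e) ∧ b = Sum.inr s) ∨ (a = Sum.inl (G.snd e) ∧ b = Sum.inr t))
  E := {f : G.E // f ≠ e} ⊕ H.E
  fintV := quotFintype _
  fintE := by classical exact inferInstance
  fst := Sum.elim (fun f => Quot.mk _ (Sum.inl (G.fst f.1)))
    (fun f => Quot.mk _ (Sum.inr (H.fst f)))
  snd := Sum.elim (fun f => Quot.mk _ (Sum.inl (G.snd f.1)))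
    (fun f => Quot.mk _ (Sum.inr (H.snd f)))

/-! ### Combinatorial embeddings (rotation systems) and planarity -/

/-- Darts: each edge gives two darts. -/
def Dart : Type := G.E × Bool

noncomputable instance : Fintype G.Dart := inferInstanceAs (Fintype (G.E × Bool))

/-- The vertex at which a dart is based. -/
def dartVertex (d : G.Dart) : G.V := cond d.2 (G.fst d.1) (G.snd d.1)

/-- The involution exchanging the two darts of each edge. -/
def dartFlip : Equiv.Perm G.Dart where
  toFun d := (d.1, !d.2)
  invFun d := (d.1, !d.2)
  left_inv := fun d => by cases d; simp <;> rfl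
  right_inv := fun d => by cases d; simp <;> rfl

/-- `σ` is a rotation system: its orbits are exactly the sets of darts based at a
common vertex. -/
def IsRotation (σ : Equiv.Perm G.Dart) : Prop :=
  ∀ d d' : G.Dart, σ.SameCycle d d' ↔ G.dartVertex d = G.dartVertex d'

/-- The face permutation of a rotation system. -/
def facePerm (σ : Equiv.Perm G.Dart) : Equiv.Perm G.Dart := G.dartFlip.trans σ

/-- The faces of the embedding given by `σ`: orbits of the face permutation. -/
def Faces (σ : Equiv.Perm G.Dart) : Type := Quot (G.facePerm σ).SameCycle

/-- The face containing a given dart. -/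
def faceOf (σ : Equiv.Perm G.Dart) (d : G.Dart) : G.Faces σ := Quot.mk _ d

noncomputable def numFaces (σ : Equiv.Perm G.Dart) : ℕ := Nat.card (G.Faces σ)

noncomputable def numComponents : ℕ := Nat.card (Quot G.Adj)

/-- The number of connected components containing at least one edge. -/
noncomputable def numEdgedComponents : ℕ :=
  Nat.card {c : Quot G.Adj // ∃ e : G.E, Quot.mk G.Adj (G.fst e) = c}

/-- `σ` is a planar (genus zero) embedding, by Euler's formula
(componentwise `V - E + F = 2`, where components without edges contribute one global face). -/
def IsPlanarRotation (σ : Equiv.Perm G.Dart) : Prop :=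
  G.IsRotation σ ∧
    G.numFaces σ + Nat.card G.V = Nat.card G.E + G.numComponents + G.numEdgedComponents

/-- `G` is planar: it admits a genus-zero combinatorial embedding. -/
def IsPlanar : Prop := ∃ σ : Equiv.Perm G.Dart, G.IsPlanarRotation σ

/-- The boundary of a face, as an element of `F_2^E`: the edges having exactly one of
their two darts on the face. -/
noncomputable def faceBoundary (σ : Equiv.Perm G.Dart) (c : G.Faces σ) : G.E → ZMod 2 :=
  fun e => ∑ b : Bool, if G.faceOf σ (e, b) = c then 1 else 0

/-- The vertex `v` lies on the face `c`. -/
def VertexOnFace (σ : Equiv.Perm G.Dart) (v : G.V) (c : G.Faces σ) : Prop :=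
  ∃ d : G.Dart, G.faceOf σ d = c ∧ G.dartVertex d = v

/-- The edge `e` lies on the face `c`. -/
def EdgeOnFace (σ : Equiv.Perm G.Dart) (e : G.E) (c : G.Faces σ) : Prop :=
  ∃ b : Bool, G.faceOf σ (e, b) = c

end Multigraph

/-! Let `B` be a cycle basis of `G` of charge `b(G)`, extended by zero to `G + uv`. Since `G` is
connected, some edge set of `G` has boundary `{u, v}`; together with the new edge it gives a cycle
`C` through `uv`. A cycle `x` of `G + uv` decomposes as `x(uv) • C` plus a cycle avoiding `uv`, i.e.
a cycle of `G`, so `B ∪ {C}` spans; it is independent because `C` is its only member through `uv`.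
Adding `C` raises the charge of every edge by at most one. -/

theorem zmodTwo_add_self {α : Type*} (x : α → ZMod 2) : x + x = 0 :=
  funext fun a => CharTwo.add_self_eq_zero (x a)

namespace Multigraph

open Matrix

variable (G : Multigraph)

def incMatrix : Matrix G.V G.E (ZMod 2) := Matrix.of G.inc

variable {G}

theorem mem_cycleSpace_iff {x : G.E → ZMod 2} : x ∈ G.cycleSpace ↔ G.incMatrix *ᵥ x = 0 := by
  simp [cycleSpace, funext_iff, mulVec, dotProduct, incMatrix]

theorem incMatrix_col (e : G.E) :
    G.incMatrix.col e = Pi.single (G.fst e) 1 + Pi.single (G.snd e) 1 := by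
  ext w
  simp [incMatrix, inc, Pi.single_apply, eq_comm]

theorem exists_incMatrix_mulVec_eq {a b : G.V} (h : Relation.ReflTransGen G.Adj a b) :
    ∃ p, G.incMatrix *ᵥ p = Pi.single a 1 + Pi.single b 1 := by
  induction h with
  | refl => exact ⟨0, by rw [mulVec_zero, zmodTwo_add_self]⟩
  | @tail b c _ hbc ih =>
    obtain ⟨p, hp⟩ := ih
    obtain ⟨e, he⟩ := hbc
    have hcol : G.incMatrix.col e = Pi.single b 1 + Pi.single c 1 := by
      rcases he with ⟨h1, h2⟩ | ⟨h1, h2⟩ <;> rw [incMatrix_col, h1, h2]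
      exact add_comm _ _
    refine ⟨p + Pi.single e 1, ?_⟩
    rw [mulVec_add, mulVec_single_one, hp, hcol]
    linear_combination zmodTwo_add_self (Pi.single b 1 : G.V → ZMod 2)

theorem addEdge_incMatrix_mulVec (u v : G.V) (x : (G.addEdge u v).E → ZMod 2) :
    (G.addEdge u v).incMatrix *ᵥ x
      = x none • (Pi.single u 1 + Pi.single v 1) + G.incMatrix *ᵥ fun e => x (some e) := by
  have hcol : (G.addEdge u v).incMatrix.col none = Pi.single u 1 + Pi.single v 1 :=
    incMatrix_col (G := G.addEdge u v) none
  ext w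
  change ∑ o : Option G.E, (G.addEdge u v).incMatrix w o * x o
    = x none * (Pi.single u 1 + Pi.single v 1 : G.V → ZMod 2) w
      + ∑ e, G.incMatrix w e * x (some e)
  rw [Fintype.sum_option, mul_comm]
  exact congrArg (· + _) (congrArg (x none * ·) (congrFun hcol w))

variable (G) in
def extendByZero (u v : G.V) : (G.E → ZMod 2) →ₗ[ZMod 2] ((G.addEdge u v).E → ZMod 2) :=
  Function.ExtendByZero.linearMap (ZMod 2) some

variable {u v : G.V}

theorem mem_cycleSpace_addEdge_iff {x : (G.addEdge u v).E → ZMod 2} :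
    x ∈ (G.addEdge u v).cycleSpace ↔
      x none • (Pi.single u 1 + Pi.single v 1) + G.incMatrix *ᵥ (fun e => x (some e)) = 0 := by
  rw [mem_cycleSpace_iff, addEdge_incMatrix_mulVec]
  exact Iff.rfl

@[simp]
theorem extendByZero_apply_none (x : G.E → ZMod 2) : G.extendByZero u v x none = 0 :=
  Function.extend_apply' _ _ _ fun ⟨_, h⟩ => Option.some_ne_none _ h

@[simp]
theorem extendByZero_apply_some (x : G.E → ZMod 2) (e : G.E) : G.extendByZero u v x (some e) = x e :=
  (Option.some_injective _).extend_apply x 0 e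

theorem extendByZero_injective : Function.Injective (G.extendByZero u v) :=
  Function.extend_injective (Option.some_injective _) (0 : Option G.E → ZMod 2)

theorem extendByZero_eq_of_apply_none {y : (G.addEdge u v).E → ZMod 2} (hy : y none = 0) :
    G.extendByZero u v (fun e => y (some e)) = y := by
  ext (_ | e)
  · rw [extendByZero_apply_none, hy]
  · exact extendByZero_apply_some _ e

theorem extendByZero_mem_cycleSpace_iff {x : G.E → ZMod 2} :
    G.extendByZero u v x ∈ (G.addEdge u v).cycleSpace ↔ x ∈ G.cycleSpace := by
  rw [mem_cycleSpace_addEdge_iff, mem_cycleSpace_iff, extendByZero_apply_none, zero_smul, zero_add]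
  simp only [extendByZero_apply_some]

theorem cycleSpace_addEdge_eq {C : (G.addEdge u v).E → ZMod 2}
    (hC : C ∈ (G.addEdge u v).cycleSpace) (hC1 : C none = 1) :
    (G.addEdge u v).cycleSpace = (ZMod 2 ∙ C) ⊔ G.cycleSpace.map (G.extendByZero u v) := by
  apply le_antisymm
  · intro x hx
    set y := x - x none • C
    have hy : y none = 0 := by
      change x none - x none * C none = 0
      rw [hC1, mul_one, sub_self]
    rw [Submodule.mem_sup]
    refine ⟨x none • C, Submodule.smul_mem _ _ (Submodule.mem_span_singleton_self C),
      y, ⟨fun e => y (some e), ?_, extendByZero_eq_of_apply_none hy⟩, add_sub_cancel _ _⟩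
    rw [SetLike.mem_coe, ← extendByZero_mem_cycleSpace_iff (u := u) (v := v),
      extendByZero_eq_of_apply_none hy]
    exact sub_mem hx (Submodule.smul_mem _ _ hC)
  · refine sup_le ((Submodule.span_singleton_le_iff_mem _ _).mpr hC) ?_
    exact Submodule.map_le_iff_le_comap.mpr fun x hx => extendByZero_mem_cycleSpace_iff.mpr hx

theorem Connected.exists_cycle_through_addEdge (hG : G.Connected) (u v : G.V) :
    ∃ C ∈ (G.addEdge u v).cycleSpace, C none = 1 := by
  obtain ⟨p, hp⟩ := exists_incMatrix_mulVec_eq (hG.2 u v)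
  refine ⟨fun o => o.elim 1 p, ?_, rfl⟩
  rw [mem_cycleSpace_addEdge_iff]
  change (1 : ZMod 2) • _ + G.incMatrix *ᵥ p = 0
  rw [one_smul, hp, zmodTwo_add_self]

theorem IsCycleBasis.addEdge {B : Finset (G.E → ZMod 2)} (hB : G.IsCycleBasis B)
    {C : (G.addEdge u v).E → ZMod 2} (hC : C ∈ (G.addEdge u v).cycleSpace) (hC1 : C none = 1) :
    (G.addEdge u v).IsCycleBasis (insert C (B.image (G.extendByZero u v))) := by
  obtain ⟨hBmem, hBli, hBspan⟩ := hB
  have hcoe : ((insert C (B.image (G.extendByZero u v)) : Finset _) : Set _)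
      = insert C (G.extendByZero u v '' B) := by
    push_cast; rfl
  have hspan : Submodule.span (ZMod 2) (G.extendByZero u v '' B)
      = G.cycleSpace.map (G.extendByZero u v) := by
    rw [Submodule.span_image, hBspan]
  refine ⟨?_, ?_, ?_⟩
  · intro x hx
    rcases Finset.mem_insert.mp hx with rfl | hx
    · exact hC
    · obtain ⟨b, hb, rfl⟩ := Finset.mem_image.mp hx
      exact extendByZero_mem_cycleSpace_iff.mpr (hBmem b hb)
  · change LinearIndepOn (ZMod 2) id
      (↑(insert C (B.image (G.extendByZero u v))) : Set ((G.addEdge u v).E → ZMod 2))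
    rw [hcoe]
    have hBli : LinearIndepOn (ZMod 2) id (B : Set (G.E → ZMod 2)) := hBli
    refine (hBli.image ?_).id_insert ?_
    · rw [LinearMap.ker_eq_bot.mpr extendByZero_injective]
      exact disjoint_bot_right
    · rw [hspan]
      rintro ⟨x, -, hx⟩
      have hnone := congrFun hx none
      rw [extendByZero_apply_none, hC1] at hnone
      exact zero_ne_one hnone
  · rw [hcoe, Submodule.span_insert, hspan, cycleSpace_addEdge_eq hC hC1]

theorem charge_insert_le (B : Finset (G.E → ZMod 2)) (c : G.E → ZMod 2) (e : G.E) :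
    G.charge (insert c B) e ≤ G.charge B e + 1 := by
  unfold charge
  rw [Finset.filter_insert]
  split_ifs
  · exact Finset.card_insert_le _ _
  · exact Nat.le_succ _

theorem charge_image_extendByZero_none (B : Finset (G.E → ZMod 2)) :
    (G.addEdge u v).charge (B.image (G.extendByZero u v)) none = 0 := by
  simp [charge, Finset.filter_image]

theorem charge_image_extendByZero_some_le (B : Finset (G.E → ZMod 2)) (e : G.E) :
    (G.addEdge u v).charge (B.image (G.extendByZero u v)) (some e) ≤ G.charge B e := by
  simp only [charge, Finset.filter_image, extendByZero_apply_some]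
  exact Finset.card_image_le

theorem IsKBasis.addEdge {k : ℕ} {B : Finset (G.E → ZMod 2)} (hB : G.IsKBasis k B)
    {C : (G.addEdge u v).E → ZMod 2} (hC : C ∈ (G.addEdge u v).cycleSpace) (hC1 : C none = 1) :
    (G.addEdge u v).IsKBasis (k + 1) (insert C (B.image (G.extendByZero u v))) := by
  refine ⟨hB.1.addEdge hC hC1, fun o => (charge_insert_le _ _ _).trans (Nat.add_le_add_right ?_ 1)⟩
  rcases o with _ | e
  · rw [charge_image_extendByZero_none]
    exact Nat.zero_le k
  · exact (charge_image_extendByZero_some_le B e).trans (hB.2 e)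

variable (G) in
theorem exists_isCycleBasis : ∃ B, G.IsCycleBasis B := by
  obtain ⟨b, hbsub, hbspan, hbli⟩ :=
    exists_linearIndependent (ZMod 2) (G.cycleSpace : Set (G.E → ZMod 2))
  have hfin := Set.toFinite b
  refine ⟨hfin.toFinset, fun x hx => hbsub (hfin.mem_toFinset.mp hx), ?_, ?_⟩
  · change LinearIndepOn (ZMod 2) id (↑hfin.toFinset : Set (G.E → ZMod 2))
    rwa [hfin.coe_toFinset]
  · rw [hfin.coe_toFinset, hbspan, Submodule.span_eq]

variable (G) in
theorem exists_isKBasis_basisNum : ∃ B, G.IsKBasis G.basisNum B := by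
  obtain ⟨B, hB⟩ := G.exists_isCycleBasis
  exact Nat.sInf_mem (s := {k | ∃ B, G.IsKBasis k B})
    ⟨B.card, B, hB, fun e => Finset.card_filter_le _ _⟩

end Multigraph

/-- For any connected graph `G` and any pair of vertices `u, v`, the basis
number of the graph `G + uv` obtained by adding an edge `uv` (possibly parallel) satisfies
`b(G + uv) ≤ b(G) + 1`. -/
theorem basisNum_addEdge_le (G : Multigraph) (hG : G.Connected) (u v : G.V) :
    (G.addEdge u v).basisNum ≤ G.basisNum + 1 := by
  obtain ⟨B, hB⟩ := G.exists_isKBasis_basisNum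
  obtain ⟨C, hC, hC1⟩ := hG.exists_cycle_through_addEdge u v
  exact Nat.sInf_le ⟨_, hB.addEdge hC hC1⟩
end
end

section
/- For every positive integer ℓ, there exists a graph G with maximum degree 3 and basis number b(G) ≥ ℓ. -/
open scoped Classical

noncomputable section

/-!
If every nonzero element of the cycle space of a graph has at least `w` edges, the members of
any basis have total size at least `w (|E| - |V|)`, so some edge lies in at least
`w (|E| - |V|) / |E|` of them; for a cubic graph this is `w / 3`.

Cubic graphs with large `w` are the bi-Cayley graphs of `GL(2, ℤ/n)` with respect to
`{1, A, B}`, where `A = !![1, 2; 0, 1]` and `B = !![1, 0; 2, 1]`: following a nonzero even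
subgraph with `m` edges around yields a word of length at most `2m` in `A^{±1}, B^{±1}` without
cancellation that is trivial modulo `n`. Sanov's ping-pong argument shows that over `ℤ` such a
word has a column without zero entries, all of absolute value at most `3 ^ (2m)`; so it is
nontrivial modulo `n = 3 ^ (6ℓ)` unless `m ≥ 3ℓ`.
-/

open Matrix

theorem Function.exists_isPeriodicPt_le_card {α : Type*} [Fintype α] [Nonempty α] (f : α → α) :
    ∃ x m, 0 < m ∧ m ≤ Fintype.card α ∧ IsPeriodicPt f m x := by
  set x₀ := Classical.arbitrary α
  obtain ⟨a, b, heq, hne⟩ : ∃ a b, f^[a] x₀ = f^[b] x₀ ∧ a ≠ b := by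
    simpa [Injective] using not_injective_infinite_finite (f^[·] x₀)
  wlog hab : a < b generalizing a b
  · exact this b a heq.symm hne.symm (by omega)
  have hper : f^[a] x₀ ∈ periodicPts f :=
    mk_mem_periodicPts (n := b - a) (by omega) <| by
      rw [IsPeriodicPt, IsFixedPt, ← iterate_add_apply, Nat.sub_add_cancel hab.le, heq]
  exact ⟨_, _, minimalPeriod_pos_of_mem_periodicPts hper, minimalPeriod_le_card,
    isPeriodicPt_minimalPeriod f _⟩

theorem Fintype.exists_ne_ne_zero_of_sum_eq_zero {ι M : Type*} [Fintype ι] [AddCommMonoid M]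
    {f : ι → M} (h : ∑ i, f i = 0) {i : ι} (hi : f i ≠ 0) : ∃ j ≠ i, f j ≠ 0 := by
  by_contra! hf
  exact hi (by rwa [Fintype.sum_eq_single i hf] at h)

section Transvection

variable {n R : Type*} [Fintype n] [DecidableEq n] [CommRing R]

lemma Matrix.transvection_mulVec_apply_self (i j : n) (c : R) (v : n → R) :
    (transvection i j c *ᵥ v) i = v i + c * v j := by
  simp [transvection, add_mulVec, single_mulVec]

lemma Matrix.transvection_mulVec_apply_of_ne {i k : n} (h : k ≠ i) (j : n) (c : R) (v : n → R) :
    (transvection i j c *ᵥ v) k = v k := by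
  simp [transvection, add_mulVec, single_mulVec, Function.update_of_ne h]

end Transvection

section WordProd

variable {ι Γ : Type*} [Group Γ] (α : ι → Γ)

/-- The head of the word is the rightmost factor, so that matrices act on a vector letter by
letter in list order; the exponents alternate between `ε` and `-ε`. -/
def wordProd : ℤˣ → List ι → Γ
  | _, [] => 1
  | ε, a :: t => wordProd (-ε) t * α a ^ (ε : ℤ)

@[simp]
lemma wordProd_nil (ε : ℤˣ) : wordProd α ε [] = 1 := rfl

@[simp]
lemma wordProd_cons (ε : ℤˣ) (a : ι) (t : List ι) :
    wordProd α ε (a :: t) = wordProd α (-ε) t * α a ^ (ε : ℤ) := rfl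

lemma map_wordProd {Γ' : Type*} [Group Γ'] (f : Γ →* Γ') (ε : ℤˣ) (l : List ι) :
    f (wordProd α ε l) = wordProd (f ∘ α) ε l := by
  induction l generalizing ε with
  | nil => simp
  | cons a t ih => simp [ih, map_zpow]

end WordProd

section ClosedWalk

variable {ι Γ : Type*} [Group Γ] (α : ι → Γ) {T : Type*} (letter mid : T → ι) (next : T → T)

def walkWord (p : T) : ℕ → List ι
  | 0 => []
  | k + 1 => mid (next^[k] p) :: letter (next^[k] p) :: walkWord p k

variable {letter mid next}

lemma length_walkWord (p : T) (k : ℕ) : (walkWord letter mid next p k).length = 2 * k := by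
  induction k with
  | zero => rfl
  | succ k ih => rw [walkWord, List.length_cons, List.length_cons, ih]; ring

lemma isChain_walkWord (hmid : ∀ t, mid t ≠ letter t) (hnext : ∀ t, letter (next t) ≠ mid t)
    (p : T) (k : ℕ) : (letter (next^[k] p) :: walkWord letter mid next p k).IsChain (· ≠ ·) := by
  induction k with
  | zero => exact List.isChain_singleton _
  | succ k ih =>
    rw [walkWord, List.isChain_cons_cons, List.isChain_cons_cons, Function.iterate_succ_apply']
    exact ⟨hnext _, hmid _, ih⟩

lemma pos_iterate_eq_mul_wordProd {pos : T → Γ}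
    (hpos : ∀ t, pos (next t) = pos t * α (letter t) * (α (mid t))⁻¹) (p : T) (k : ℕ) :
    pos (next^[k] p) = pos p * wordProd α (-1) (walkWord letter mid next p k) := by
  induction k with
  | zero => simp [walkWord]
  | succ k ih => simp [walkWord, Function.iterate_succ_apply', hpos, ih, mul_assoc]

theorem exists_wordProd_eq_one_of_step [Fintype T] [Nonempty T] {pos : T → Γ}
    (hmid : ∀ t, mid t ≠ letter t) (hnext : ∀ t, letter (next t) ≠ mid t)
    (hpos : ∀ t, pos (next t) = pos t * α (letter t) * (α (mid t))⁻¹) :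
    ∃ l : List ι, l.IsChain (· ≠ ·) ∧ 2 ≤ l.length ∧ l.length ≤ 2 * Fintype.card T ∧
      wordProd α (-1) l = 1 := by
  obtain ⟨p, m, hm, hmT, hp⟩ := Function.exists_isPeriodicPt_le_card next
  refine ⟨walkWord letter mid next p m, (isChain_walkWord hmid hnext p m).tail,
    by rw [length_walkWord]; omega, by rw [length_walkWord]; omega, ?_⟩
  have := pos_iterate_eq_mul_wordProd α hpos p m
  rwa [hp.eq, left_eq_mul] at this

end ClosedWalk

namespace Multigraph

variable (G : Multigraph)

lemma cycleSpace_eq_ker : G.cycleSpace = LinearMap.ker (Matrix.of G.inc).mulVecLin :=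
  Submodule.ext fun _ => funext_iff.symm

lemma card_sub_card_le_finrank_cycleSpace :
    Fintype.card G.E - Fintype.card G.V ≤ Module.finrank (ZMod 2) G.cycleSpace := by
  have hrank := LinearMap.finrank_range_add_finrank_ker (Matrix.of G.inc).mulVecLin
  have hrange := Submodule.finrank_le (LinearMap.range (Matrix.of G.inc).mulVecLin)
  rw [Module.finrank_fintype_fun_eq_card] at hrank hrange
  rw [cycleSpace_eq_ker]
  omega

lemma sum_charge (B : Finset (G.E → ZMod 2)) :
    ∑ e, G.charge B e = ∑ x ∈ B, hammingNorm x := by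
  simp only [charge, hammingNorm, Finset.card_filter]
  exact Finset.sum_comm

lemma exists_isKBasis : ∃ k B, G.IsKBasis k B := by
  obtain ⟨B, hB, -, hspan, hind⟩ :=
    Submodule.exists_finset_span_eq_linearIndepOn (ZMod 2) (G.cycleSpace : Set (G.E → ZMod 2))
  rw [Submodule.span_eq] at hspan
  exact ⟨B.card, B, ⟨fun x hx => hB hx, hind, hspan⟩, fun e => Finset.card_filter_le _ _⟩

lemma IsCycleBasis.finrank_le_card {B : Finset (G.E → ZMod 2)} (hB : G.IsCycleBasis B) :
    Module.finrank (ZMod 2) G.cycleSpace ≤ B.card := by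
  rw [← hB.2.2]
  exact finrank_span_finset_le_card B

theorem le_basisNum_of_le_hammingNorm {ℓ w : ℕ} (hE : 0 < Fintype.card G.E)
    (hw : ∀ x ∈ G.cycleSpace, x ≠ 0 → w ≤ hammingNorm x)
    (hcount : ℓ * Fintype.card G.E ≤ (Fintype.card G.E - Fintype.card G.V) * w) :
    ℓ ≤ G.basisNum := by
  obtain ⟨k₀, B₀, hB₀⟩ := G.exists_isKBasis
  refine le_csInf ⟨k₀, B₀, hB₀⟩ ?_
  rintro k ⟨B, hB, hcharge⟩
  refine Nat.le_of_mul_le_mul_right ?_ hE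
  calc ℓ * Fintype.card G.E ≤ (Fintype.card G.E - Fintype.card G.V) * w := hcount
    _ ≤ B.card * w := Nat.mul_le_mul_right w
        (G.card_sub_card_le_finrank_cycleSpace.trans (hB.finrank_le_card G))
    _ = ∑ _x ∈ B, w := by rw [Finset.sum_const, smul_eq_mul]
    _ ≤ ∑ x ∈ B, hammingNorm x :=
        Finset.sum_le_sum fun x hx => hw x (hB.1 x hx) (hB.2.1.ne_zero ⟨x, hx⟩)
    _ = ∑ e, G.charge B e := (G.sum_charge B).symm
    _ ≤ ∑ _e : G.E, k := Finset.sum_le_sum fun e _ => hcharge e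
    _ = k * Fintype.card G.E := by rw [Finset.sum_const, smul_eq_mul, mul_comm, Finset.card_univ]

section BiCayley

variable {ι Γ : Type} [Fintype ι] [Group Γ] [Fintype Γ] (α : ι → Γ)

def biCayley : Multigraph where
  V := Bool × Γ
  E := ι × Γ
  fintV := inferInstance
  fintE := inferInstance
  fst e := (false, e.2)
  snd e := (true, e.2 * α e.1)

lemma card_biCayley_E : Fintype.card (biCayley α).E = Fintype.card ι * Fintype.card Γ :=
  Fintype.card_prod ι Γ

lemma card_biCayley_V : Fintype.card (biCayley α).V = 2 * Fintype.card Γ :=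
  (Fintype.card_prod Bool Γ).trans (by rw [Fintype.card_bool])

lemma biCayley_sum {M : Type*} [AddCommMonoid M] (f : (biCayley α).E → M) :
    ∑ e : (biCayley α).E, f e = ∑ i, ∑ γ, f (i, γ) :=
  Fintype.sum_prod_type f

lemma biCayley_inc_false (γ : Γ) (e : ι × Γ) :
    (biCayley α).inc (false, γ) e = if e.2 = γ then 1 else 0 := by
  simp [inc, biCayley]

lemma biCayley_inc_true (γ : Γ) (e : ι × Γ) :
    (biCayley α).inc (true, γ) e = if e.2 = γ * (α e.1)⁻¹ then 1 else 0 := by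
  simp [inc, biCayley, eq_mul_inv_iff_mul_eq]

lemma biCayley_degree (v : (biCayley α).V) : (biCayley α).degree v = Fintype.card ι := by
  obtain ⟨_ | _, γ⟩ := v <;> unfold degree <;> rw [biCayley_sum] <;>
    simp [biCayley, ← eq_mul_inv_iff_mul_eq]

variable {α}

lemma sum_apply_eq_zero_of_mem_cycleSpace_biCayley {x : (biCayley α).E → ZMod 2}
    (hx : x ∈ (biCayley α).cycleSpace) (γ : Γ) :
    ∑ i, x (i, γ) = 0 ∧ ∑ i, x (i, γ * (α i)⁻¹) = 0 := by
  have hfalse := hx (false, γ)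
  have htrue := hx (true, γ)
  rw [biCayley_sum] at hfalse htrue
  simp only [biCayley_inc_false, biCayley_inc_true, ite_mul, one_mul, zero_mul,
    Finset.sum_ite_eq', Finset.mem_univ, if_true] at hfalse htrue
  exact ⟨hfalse, htrue⟩

theorem le_hammingNorm_of_mem_cycleSpace_biCayley {w : ℕ}
    (hα : ∀ l : List ι, l.IsChain (· ≠ ·) → 2 ≤ l.length → l.length < 2 * w →
      wordProd α (-1) l ≠ 1)
    {x : (biCayley α).E → ZMod 2} (hx : x ∈ (biCayley α).cycleSpace) (hx0 : x ≠ 0) :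
    w ≤ hammingNorm x := by
  let T := {e : (biCayley α).E // x e ≠ 0}
  have : Nonempty T := by
    obtain ⟨e, he⟩ := Function.ne_iff.1 hx0
    exact ⟨⟨e, he⟩⟩
  -- every vertex has even degree in the support of `x`, so a support edge can be continued by
  -- another one at its `true` end, and that one by a third at its `false` end
  have hstep (t : T) : ∃ j ≠ t.1.1, ∃ i ≠ j, x (i, t.1.2 * α t.1.1 * (α j)⁻¹) ≠ 0 := by
    obtain ⟨j, hj, hxj⟩ := Fintype.exists_ne_ne_zero_of_sum_eq_zero
      (sum_apply_eq_zero_of_mem_cycleSpace_biCayley hx (t.1.2 * α t.1.1)).2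
      (i := t.1.1) (by rw [mul_inv_cancel_right]; exact t.2)
    obtain ⟨i, hi, hxi⟩ := Fintype.exists_ne_ne_zero_of_sum_eq_zero
      (sum_apply_eq_zero_of_mem_cycleSpace_biCayley hx _).1 hxj
    exact ⟨j, hj, i, hi, hxi⟩
  choose mid hmid nextLetter hnext hxnext using hstep
  obtain ⟨l, hl, hl2, hlT, hprod⟩ := exists_wordProd_eq_one_of_step α (T := T)
    (letter := fun t => t.1.1) (pos := fun t => t.1.2) (next := fun t => ⟨_, hxnext t⟩)
    hmid hnext (fun t => rfl)
  have hcard : Fintype.card T = hammingNorm x := by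
    rw [hammingNorm, Fintype.card_subtype]
  by_contra! hw
  exact hα l hl hl2 (by omega) hprod

end BiCayley

end Multigraph

namespace Sanov

lemma rev_ne (k : Fin 2) : k.rev ≠ k := by fin_cases k <;> decide

lemma eq_rev_of_ne {j k : Fin 2} (h : k ≠ j) : j = k.rev := by
  fin_cases j <;> fin_cases k <;> simp_all

def gen (k : Fin 2) : GL (Fin 2) ℤ where
  val := transvection k k.rev 2
  inv := transvection k k.rev (-2)
  val_inv := by rw [transvection_mul_transvection_same _ _ (rev_ne k).symm]; simp
  inv_val := by rw [transvection_mul_transvection_same _ _ (rev_ne k).symm]; simp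

lemma coe_gen_zpow (k : Fin 2) (ε : ℤˣ) :
    ((gen k ^ (ε : ℤ) : GL (Fin 2) ℤ) : Matrix (Fin 2) (Fin 2) ℤ) =
      transvection k k.rev (2 * (ε : ℤ)) := by
  rcases Int.units_eq_one_or ε with rfl | rfl <;> simp [gen]

def sanovGen (a : Option (Fin 2)) : GL (Fin 2) ℤ := a.elim 1 gen

lemma coe_wordProd_cons_mulVec (ε : ℤˣ) (a : Option (Fin 2)) (t : List (Option (Fin 2)))
    (v : Fin 2 → ℤ) :
    (wordProd sanovGen ε (a :: t)).val *ᵥ v =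
      (wordProd sanovGen (-ε) t).val *ᵥ ((sanovGen a ^ (ε : ℤ)).val *ᵥ v) := by
  rw [wordProd_cons, Units.val_mul, mulVec_mulVec]

/-- The ping-pong region of `gen k ^ σ`: the `k`-th coordinate dominates, and the sign condition
makes a further application of `gen k ^ σ` increase it. -/
def Region (k : Fin 2) (σ : ℤˣ) (v : Fin 2 → ℤ) : Prop :=
  1 ≤ v k.rev ^ 2 ∧ v k.rev ^ 2 < v k ^ 2 ∧ 0 ≤ σ * v k * v k.rev

lemma pingpong_ineq (ε : ℤˣ) {x y : ℤ}
    (h : (1 ≤ x ^ 2 ∧ x ^ 2 < y ^ 2) ∨ (1 ≤ y ^ 2 ∧ y ^ 2 < x ^ 2 ∧ 0 ≤ ε * x * y)) :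
    1 ≤ y ^ 2 ∧ y ^ 2 < (x + 2 * ε * y) ^ 2 ∧ 0 ≤ ε * (x + 2 * ε * y) * y := by
  rcases Int.units_eq_one_or ε with rfl | rfl <;>
  rcases h with ⟨h1, h2⟩ | ⟨h1, h2, h3⟩ <;> push_cast at * <;>
    refine ⟨by nlinarith, ?_, ?_⟩ <;> nlinarith [sq_nonneg (x + y), sq_nonneg (x - y)]

lemma Region.gen_zpow_mulVec {j : Fin 2} {σ : ℤˣ} {v : Fin 2 → ℤ} (hv : Region j σ v)
    (k : Fin 2) (ε : ℤˣ) (h : k ≠ j ∨ ε = σ) :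
    Region k ε ((gen k ^ (ε : ℤ)).val *ᵥ v) := by
  rw [coe_gen_zpow]
  unfold Region
  rw [transvection_mulVec_apply_self, transvection_mulVec_apply_of_ne (rev_ne k)]
  apply pingpong_ineq
  by_cases hkj : k = j
  · subst hkj
    obtain rfl : ε = σ := h.resolve_left (not_not.2 rfl)
    exact Or.inr hv
  · obtain rfl := eq_rev_of_ne hkj
    rw [Region, Fin.rev_rev] at hv
    exact Or.inl ⟨hv.1, hv.2.1⟩

lemma region_gen_zpow_mulVec_single (k : Fin 2) (ε : ℤˣ) :
    Region k ε ((gen k ^ (ε : ℤ)).val *ᵥ Pi.single k.rev 1) := by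
  rw [coe_gen_zpow]
  unfold Region
  rw [transvection_mulVec_apply_self, transvection_mulVec_apply_of_ne (rev_ne k)]
  rcases Int.units_eq_one_or ε with rfl | rfl <;> simp [(rev_ne k).symm]

lemma Region.apply_ne_zero {k : Fin 2} {σ : ℤˣ} {v : Fin 2 → ℤ} (hv : Region k σ v) (i : Fin 2) :
    v i ≠ 0 := by
  obtain ⟨h1, h2, -⟩ := hv
  rcases eq_or_ne i k with rfl | hik
  · intro h
    rw [h] at h2
    nlinarith [sq_nonneg (v i.rev)]
  · obtain rfl := eq_rev_of_ne hik.symm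
    intro h
    rw [h] at h1
    norm_num at h1

/-- The ping-pong invariant: `prev` is the letter applied last, and the last letter other than
`none` was `some j`, applied with sign `σ`, either as `prev` itself or just before `prev = none`;
either way the chain condition rules out a cancellation with the next letter. -/
theorem exists_region_wordProd_mulVec (t : List (Option (Fin 2))) :
    ∀ (prev : Option (Fin 2)) (ε σ : ℤˣ) (j : Fin 2) (v : Fin 2 → ℤ),
      (prev :: t).IsChain (· ≠ ·) → Region j σ v →
      (prev = some j ∧ σ = -ε ∨ prev = none ∧ σ = ε) →
      ∃ j' σ', Region j' σ' ((wordProd sanovGen ε t).val *ᵥ v) := by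
  induction t with
  | nil => exact fun _ _ σ j v _ hv _ => ⟨j, σ, by simpa using hv⟩
  | cons a t ih =>
    intro prev ε σ j v hchain hv hstate
    rw [List.isChain_cons_cons] at hchain
    rw [coe_wordProd_cons_mulVec]
    cases a with
    | none =>
      obtain ⟨-, hσ⟩ := hstate.resolve_right fun h => hchain.1 h.1
      simpa [sanovGen] using ih none (-ε) σ j v hchain.2 hv (Or.inr ⟨rfl, hσ⟩)
    | some k =>
      refine ih (some k) (-ε) ε k _ hchain.2 (hv.gen_zpow_mulVec k ε ?_) (Or.inl ⟨rfl, by simp⟩)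
      rcases hstate with ⟨rfl, -⟩ | ⟨-, rfl⟩
      · exact Or.inl fun h => hchain.1 (by rw [h])
      · exact Or.inr rfl

theorem wordProd_some_cons_apply_ne_zero {k : Fin 2} {t : List (Option (Fin 2))}
    (hl : (some k :: t).IsChain (· ≠ ·)) (ε : ℤˣ) (i : Fin 2) :
    (wordProd sanovGen ε (some k :: t)).val i k.rev ≠ 0 := by
  have hcol := congrFun (mulVec_single_one (wordProd sanovGen ε (some k :: t)).val k.rev) i
  rw [col_apply, coe_wordProd_cons_mulVec] at hcol
  obtain ⟨j, σ, hreg⟩ := exists_region_wordProd_mulVec t (some k) (-ε) ε k _ hl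
    (region_gen_zpow_mulVec_single k ε) (Or.inl ⟨rfl, by simp⟩)
  rw [← hcol]
  exact hreg.apply_ne_zero i

theorem exists_col_wordProd_ne_zero {l : List (Option (Fin 2))} (hl : l.IsChain (· ≠ ·))
    (h2 : 2 ≤ l.length) (ε : ℤˣ) : ∃ c, ∀ i, (wordProd sanovGen ε l).val i c ≠ 0 := by
  match l, hl, h2 with
  | some k :: t, hl, _ => exact ⟨k.rev, wordProd_some_cons_apply_ne_zero hl ε⟩
  | none :: some k :: t, hl, _ =>
    refine ⟨k.rev, fun i => ?_⟩
    simpa [sanovGen] using wordProd_some_cons_apply_ne_zero hl.tail (-ε) i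
  | none :: none :: t, hl, _ => simp at hl

lemma abs_sanovGen_zpow_mulVec_le (a : Option (Fin 2)) (ε : ℤˣ) {v : Fin 2 → ℤ} {C : ℤ}
    (hv : ∀ i, |v i| ≤ C) (i : Fin 2) : |((sanovGen a ^ (ε : ℤ)).val *ᵥ v) i| ≤ 3 * C := by
  have hC : 0 ≤ C := (abs_nonneg _).trans (hv i)
  cases a with
  | none => simpa [sanovGen] using (hv i).trans (by linarith)
  | some k =>
    simp only [sanovGen, Option.elim_some, coe_gen_zpow]
    rcases eq_or_ne i k with rfl | hik
    · rw [transvection_mulVec_apply_self]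
      calc |v i + 2 * ε * v i.rev| ≤ |v i| + |2 * ε * v i.rev| := abs_add_le _ _
        _ = |v i| + 2 * |v i.rev| := by
          rcases Int.units_eq_one_or ε with rfl | rfl <;> simp [abs_mul]
        _ ≤ 3 * C := by linarith [hv i, hv i.rev]
    · obtain rfl := eq_rev_of_ne hik.symm
      rw [transvection_mulVec_apply_of_ne (rev_ne k)]
      linarith [hv k.rev]

theorem abs_wordProd_mulVec_le (ε : ℤˣ) (l : List (Option (Fin 2))) {v : Fin 2 → ℤ} {C : ℤ}
    (hv : ∀ i, |v i| ≤ C) (i : Fin 2) :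
    |((wordProd sanovGen ε l).val *ᵥ v) i| ≤ 3 ^ l.length * C := by
  induction l generalizing ε v C with
  | nil => simpa using hv i
  | cons a t ih =>
    rw [coe_wordProd_cons_mulVec, List.length_cons, pow_succ, mul_assoc]
    exact ih (-ε) (abs_sanovGen_zpow_mulVec_le a ε hv)

theorem abs_wordProd_apply_le (ε : ℤˣ) (l : List (Option (Fin 2))) (i c : Fin 2) :
    |(wordProd sanovGen ε l).val i c| ≤ 3 ^ l.length := by
  have h := abs_wordProd_mulVec_le ε l (v := Pi.single c 1) (C := 1)
    (fun j => by rcases eq_or_ne j c with rfl | h <;> simp [*]) i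
  rwa [mulVec_single_one, col_apply, mul_one] at h

theorem wordProd_map_ne_one {n : ℕ} {l : List (Option (Fin 2))} (hl : l.IsChain (· ≠ ·))
    (h2 : 2 ≤ l.length) (hn : 3 ^ l.length < n) (ε : ℤˣ) :
    wordProd (GeneralLinearGroup.map (Int.castRingHom (ZMod n)) ∘ sanovGen) ε l ≠ 1 := by
  rw [← map_wordProd]
  intro h
  obtain ⟨c, hc⟩ := exists_col_wordProd_ne_zero hl h2 ε
  have hentry : (((wordProd sanovGen ε l).val c.rev c : ℤ) : ZMod n) = 0 := by
    simpa [GeneralLinearGroup.map_apply, one_apply_ne (rev_ne c)] using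
      congrArg (fun g : GL (Fin 2) (ZMod n) => g c.rev c) h
  rw [ZMod.intCast_zmod_eq_zero_iff_dvd] at hentry
  have hbound := abs_wordProd_apply_le ε l c.rev c
  exact hc c.rev (Int.eq_zero_of_abs_lt_dvd hentry (hbound.trans_lt (by exact_mod_cast hn)))

end Sanov
/-- For every positive integer `ℓ`, there exists a graph `G` with maximum
degree 3 and basis number `b(G) ≥ ℓ`. -/
theorem exists_maxDegThree_large_basisNum (ℓ : ℕ) :
    ∃ G : Multigraph, (∀ v : G.V, G.degree v ≤ 3) ∧ ℓ ≤ G.basisNum := by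
  let α := GeneralLinearGroup.map (Int.castRingHom (ZMod (3 ^ (6 * ℓ)))) ∘ Sanov.sanovGen
  let G := Multigraph.biCayley α
  refine ⟨G, fun v => by simp [G, Multigraph.biCayley_degree], ?_⟩
  obtain ⟨N, hE, hV, hN⟩ : ∃ N, Fintype.card G.E = 3 * N ∧ Fintype.card G.V = 2 * N ∧ 0 < N :=
    ⟨_, by simp [G, Multigraph.card_biCayley_E], Multigraph.card_biCayley_V α, Fintype.card_pos⟩
  refine G.le_basisNum_of_le_hammingNorm (w := 3 * ℓ) (by omega) ?_ ?_
  · refine fun x hx hx0 =>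
      Multigraph.le_hammingNorm_of_mem_cycleSpace_biCayley (fun l hl h2 hlen => ?_) hx hx0
    exact Sanov.wordProd_map_ne_one hl h2 (Nat.pow_lt_pow_right (by norm_num) (by omega)) _
  · rw [hE, hV, Nat.sub_eq_of_eq_add (by ring : 3 * N = N + 2 * N)]
    exact le_of_eq (by ring)
end
end
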